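/- arXiv:2301.10873 — 2 statements merged into one kernel-verified Lean document; each statement's English description precedes it below -/
import Mathlib

section
/- Let T > 0, L ≥ 0, let δ > 0 be such that T/δ is a positive integer, let Q ∈ ℝ^{n×n} be positive semidefinite, and let w : [0,T] → ℝ^n be such that t ↦ w(t)w(t)^T is entrywise Lebesgue integrable and either (i) w is L-square Lipschitz or (ii) V_0^T(w) ≤ (1/2)LT. If ∫_0^T w(t)w(t)^T dt ≤ Q in the Loewner order, then δ · Σ_{k=0}^{T/δ−1} w(kδ)w(kδ)^T ≤ Q + (1/2)δTL·I_n. -/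
open MeasureTheory Matrix

noncomputable def opNorm {ι κ : Type} [Fintype ι] [Fintype κ] [DecidableEq κ]
    (M : Matrix ι κ ℝ) : ℝ :=
  ‖LinearMap.toContinuousLinearMap (Matrix.toEuclideanLin M)‖

noncomputable def euclNorm {ι : Type} [Fintype ι] (v : ι → ℝ) : ℝ :=
  Real.sqrt (∑ i, v i ^ 2)

/-- `v` is `L`-square Lipschitz on `[0,T]`. -/
def SqLipschitz {ι : Type} [Fintype ι] [DecidableEq ι] (T L : ℝ) (v : ℝ → ι → ℝ) : Prop :=
  ∀ t₁ ∈ Set.Icc (0:ℝ) T, ∀ t₂ ∈ Set.Icc (0:ℝ) T,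
    opNorm (Matrix.vecMulVec (v t₁) (v t₁) - Matrix.vecMulVec (v t₂) (v t₂)) ≤ L * |t₁ - t₂|

/-- The set of all partition sums appearing in the definition of total square variation. -/
def partitionSums {ι : Type} [Fintype ι] [DecidableEq ι] (T : ℝ) (v : ℝ → ι → ℝ) : Set ℝ :=
  { s | ∃ (N : ℕ) (t : Fin (N + 1) → ℝ), Monotone t ∧ t 0 = 0 ∧ t (Fin.last N) = T ∧
      s = ∑ i : Fin N, opNorm (Matrix.vecMulVec (v (t i.succ)) (v (t i.succ)) -
            Matrix.vecMulVec (v (t i.castSucc)) (v (t i.castSucc))) }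

/-- Total square variation `V_0^T(v)`. -/
noncomputable def totalSqVar {ι : Type} [Fintype ι] [DecidableEq ι] (T : ℝ) (v : ℝ → ι → ℝ) : ℝ :=
  sSup (partitionSums T v)

/-- `V_0^T(v) ≤ c`, phrased via all partition sums. -/
def TotalSqVarLE {ι : Type} [Fintype ι] [DecidableEq ι] (T : ℝ) (v : ℝ → ι → ℝ) (c : ℝ) : Prop :=
  ∀ s ∈ partitionSums T v, s ≤ c

/-- Loewner order `M ≤ N`. -/
def loewnerLE {ι : Type} [Fintype ι] (M N : Matrix ι ι ℝ) : Prop := (N - M).PosSemidef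

/-- Strict Loewner order `M < N`. -/
def loewnerLT {ι : Type} [Fintype ι] (M N : Matrix ι ι ℝ) : Prop := (N - M).PosDef

/-- `M` is negative definite. -/
def negDefQ {ι : Type} [Fintype ι] (M : Matrix ι ι ℝ) : Prop := (-M).PosDef

/-- Entrywise Lebesgue integral of a matrix-valued function on `[0,T]`. -/
noncomputable def matIntegral {ι κ : Type} (T : ℝ) (f : ℝ → Matrix ι κ ℝ) : Matrix ι κ ℝ :=
  Matrix.of fun i j => ∫ t in Set.Ioc (0:ℝ) T, f t i j

/-- `δ • Σ_{k<N} v(kδ) v(kδ)ᵀ`. -/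
noncomputable def sampledGram {ι : Type} [Fintype ι] (δ : ℝ) (N : ℕ) (v : ℝ → ι → ℝ) :
    Matrix ι ι ℝ :=
  δ • ∑ k ∈ Finset.range N, Matrix.vecMulVec (v (k * δ)) (v (k * δ))

/-- The noise signal `ẋ − Ax − Bu` associated with a candidate system `(A,B)`. -/
def noiseSig {n m : ℕ} (xdot x : ℝ → Fin n → ℝ) (u : ℝ → Fin m → ℝ)
    (A : Matrix (Fin n) (Fin n) ℝ) (B : Matrix (Fin n) (Fin m) ℝ) : ℝ → Fin n → ℝ :=
  fun t => xdot t - A.mulVec (x t) - B.mulVec (u t)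

/-- `Σ(Q')`: systems consistent with the continuous-time data. -/
def SigmaCont {n m : ℕ} (T : ℝ) (xdot x : ℝ → Fin n → ℝ) (u : ℝ → Fin m → ℝ)
    (Q' : Matrix (Fin n) (Fin n) ℝ) :
    Set (Matrix (Fin n) (Fin n) ℝ × Matrix (Fin n) (Fin m) ℝ) :=
  { AB | loewnerLE (matIntegral T fun t =>
      Matrix.vecMulVec (noiseSig xdot x u AB.1 AB.2 t) (noiseSig xdot x u AB.1 AB.2 t)) Q' }

/-- `Σ^δ(Q')`: systems consistent with the data sampled at stepsize `δ` (with `N = T/δ` samples). -/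
def SigmaDisc {n m : ℕ} (δ : ℝ) (N : ℕ) (xdot x : ℝ → Fin n → ℝ) (u : ℝ → Fin m → ℝ)
    (Q' : Matrix (Fin n) (Fin n) ℝ) :
    Set (Matrix (Fin n) (Fin n) ℝ × Matrix (Fin n) (Fin m) ℝ) :=
  { AB | loewnerLE (sampledGram δ N (noiseSig xdot x u AB.1 AB.2)) Q' }

/-- `M^L_{x,u}`: systems whose associated noise is `L`-square Lipschitz. -/
def Mset {n m : ℕ} (T L : ℝ) (xdot x : ℝ → Fin n → ℝ) (u : ℝ → Fin m → ℝ) :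
    Set (Matrix (Fin n) (Fin n) ℝ × Matrix (Fin n) (Fin m) ℝ) :=
  { AB | SqLipschitz T L (noiseSig xdot x u AB.1 AB.2) }

/-- `N^L_{x,u}`: systems whose associated noise has total square variation at most `LT/2`. -/
def Nset {n m : ℕ} (T L : ℝ) (xdot x : ℝ → Fin n → ℝ) (u : ℝ → Fin m → ℝ) :
    Set (Matrix (Fin n) (Fin n) ℝ × Matrix (Fin n) (Fin m) ℝ) :=
  { AB | TotalSqVarLE T (noiseSig xdot x u AB.1 AB.2) (L * T / 2) }

/-- The stacked signal `ξ(t) = (ẋ(t); −x(t); −u(t))`. -/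
def xiSig {n m : ℕ} (xdot x : ℝ → Fin n → ℝ) (u : ℝ → Fin m → ℝ) (t : ℝ) :
    (Fin n ⊕ (Fin n ⊕ Fin m)) → ℝ :=
  Sum.elim (xdot t) (Sum.elim (fun i => -(x t i)) (fun j => -(u t j)))

/-- The block matrix `[[Q + βI, P, PKᵀ], [P, 0, 0], [KP, 0, 0]]`. -/
noncomputable def lmiBlock {n m : ℕ} (Q P : Matrix (Fin n) (Fin n) ℝ)
    (K : Matrix (Fin m) (Fin n) ℝ) (β : ℝ) :
    Matrix (Fin n ⊕ (Fin n ⊕ Fin m)) (Fin n ⊕ (Fin n ⊕ Fin m)) ℝ :=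
  Matrix.fromBlocks (Q + β • (1 : Matrix (Fin n) (Fin n) ℝ))
    (Matrix.of fun i jj => Sum.elim (fun j => P i j) (fun j => (P * K.transpose) i j) jj)
    (Matrix.of fun ii j => Sum.elim (fun i => P i j) (fun k => (K * P) k j) ii)
    0

/-- The continuous-data LMI. -/
def ContLMI {n m : ℕ} (T : ℝ) (xdot x : ℝ → Fin n → ℝ) (u : ℝ → Fin m → ℝ)
    (Q P : Matrix (Fin n) (Fin n) ℝ) (K : Matrix (Fin m) (Fin n) ℝ) (β : ℝ) : Prop :=
  (matIntegral T (fun t => Matrix.vecMulVec (xiSig xdot x u t) (xiSig xdot x u t)) -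
    lmiBlock Q P K β).PosSemidef

/-- The sampled-data LMI at stepsize `δ` (with `N = T/δ` samples). -/
def SampLMI {n m : ℕ} (δ : ℝ) (N : ℕ) (xdot x : ℝ → Fin n → ℝ) (u : ℝ → Fin m → ℝ)
    (Q P : Matrix (Fin n) (Fin n) ℝ) (K : Matrix (Fin m) (Fin n) ℝ) (β : ℝ) : Prop :=
  (sampledGram δ N (xiSig xdot x u) - lmiBlock Q P K β).PosSemidef


/-!
Testing against a vector `x` turns the claim into a scalar one for `g t = (w t ⬝ᵥ x) ^ 2`: the
left Riemann sum `δ * ∑ g (k * δ)` exceeds `∫ g` by at most `δ * T * L / 2 * ‖x‖ ^ 2`. On the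
cell `[k δ, (k + 1) δ]` the excess is `∫ (g (k δ) - g t)`, and
`g s - g t ≤ ‖w s w sᵀ - w t w tᵀ‖ ‖x‖ ^ 2`. Under the Lipschitz bound this integrates to
`L ‖x‖ ^ 2 δ ^ 2 / 2` per cell. Under the variation bound, pick in each cell a point `t_k` where
`g` is at most its cell average; the excess is then at most
`δ ‖x‖ ^ 2 ∑ ‖w (k δ) w (k δ)ᵀ - w t_k w t_kᵀ‖`, a part of the square-variation sum of the
partition `0 ≤ t_0 ≤ δ ≤ t_1 ≤ 2 δ ≤ ⋯ ≤ T`.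
-/

open Finset Set

section QuadraticForm

variable {ι : Type} [Fintype ι]

theorem dotProduct_vecMulVec_self_mulVec (v x : ι → ℝ) :
    x ⬝ᵥ vecMulVec v v *ᵥ x = (v ⬝ᵥ x) ^ 2 := by
  rw [vecMulVec_mulVec, op_smul_eq_smul, dotProduct_smul, smul_eq_mul, dotProduct_comm x v, sq]

theorem dotProduct_mulVec_le_opNorm [DecidableEq ι] (M : Matrix ι ι ℝ) (x : ι → ℝ) :
    x ⬝ᵥ M *ᵥ x ≤ opNorm M * (x ⬝ᵥ x) := by
  let A := toEuclideanCLM (n := ι) (𝕜 := ℝ) M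
  have hA : opNorm M = ‖A‖ := rfl
  have hx : ‖WithLp.toLp 2 x‖ ^ 2 = x ⬝ᵥ x := by
    rw [EuclideanSpace.norm_sq_eq]
    simp [dotProduct, sq]
  calc x ⬝ᵥ M *ᵥ x = inner ℝ (WithLp.toLp 2 x) (A (WithLp.toLp 2 x)) :=
        (inner_toEuclideanCLM M _ _).symm
    _ ≤ ‖WithLp.toLp 2 x‖ * ‖A (WithLp.toLp 2 x)‖ := real_inner_le_norm _ _
    _ ≤ ‖WithLp.toLp 2 x‖ * (‖A‖ * ‖WithLp.toLp 2 x‖) := by gcongr; exact A.le_opNorm _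
    _ = opNorm M * (x ⬝ᵥ x) := by rw [hA, ← hx]; ring

theorem loewnerLE_of_forall_dotProduct_mulVec_le {A B : Matrix ι ι ℝ} (hA : A.IsHermitian)
    (hB : B.IsHermitian) (h : ∀ x, x ⬝ᵥ A *ᵥ x ≤ x ⬝ᵥ B *ᵥ x) : loewnerLE A B :=
  PosSemidef.of_dotProduct_mulVec_nonneg (hB.sub hA) fun x => by
    rw [star_trivial, sub_mulVec, dotProduct_sub, sub_nonneg]
    exact h x

theorem loewnerLE.dotProduct_mulVec_le {A B : Matrix ι ι ℝ} (h : loewnerLE A B) (x : ι → ℝ) :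
    x ⬝ᵥ A *ᵥ x ≤ x ⬝ᵥ B *ᵥ x := by
  have := h.dotProduct_mulVec_nonneg x
  rwa [star_trivial, sub_mulVec, dotProduct_sub, sub_nonneg] at this

theorem dotProduct_mulVec_eq_sum (M : Matrix ι ι ℝ) (x : ι → ℝ) :
    x ⬝ᵥ M *ᵥ x = ∑ i, ∑ j, x i * x j * M i j := by
  simp only [dotProduct, mulVec, mul_sum]
  exact sum_congr rfl fun i _ => sum_congr rfl fun j _ => by ring

theorem integrableOn_dotProduct_mulVec {s : Set ℝ} {f : ℝ → Matrix ι ι ℝ}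
    (hf : ∀ i j, IntegrableOn (fun t => f t i j) s) (x : ι → ℝ) :
    IntegrableOn (fun t => x ⬝ᵥ f t *ᵥ x) s := by
  simp only [dotProduct_mulVec_eq_sum]
  exact integrable_finsetSum _ fun i _ => integrable_finsetSum _ fun j _ => (hf i j).const_mul _

theorem dotProduct_matIntegral_mulVec {T : ℝ} {f : ℝ → Matrix ι ι ℝ}
    (hf : ∀ i j, IntegrableOn (fun t => f t i j) (Ioc 0 T)) (x : ι → ℝ) :
    x ⬝ᵥ matIntegral T f *ᵥ x = ∫ t in Ioc 0 T, x ⬝ᵥ f t *ᵥ x := by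
  simp only [dotProduct_mulVec_eq_sum]
  rw [integral_finsetSum _ fun i _ => integrable_finsetSum _ fun j _ => (hf i j).const_mul _]
  refine sum_congr rfl fun i _ => ?_
  rw [integral_finsetSum _ fun j _ => (hf i j).const_mul _]
  simp only [matIntegral, of_apply, integral_const_mul]

theorem sampledGram_posSemidef {δ : ℝ} (hδ : 0 ≤ δ) (N : ℕ) (v : ℝ → ι → ℝ) :
    (sampledGram δ N v).PosSemidef :=
  (posSemidef_sum _ fun k _ => by
    simpa using posSemidef_vecMulVec_self_star (v (k * δ))).smul hδ

theorem dotProduct_sampledGram_mulVec (δ : ℝ) (N : ℕ) (v : ℝ → ι → ℝ) (x : ι → ℝ) :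
    x ⬝ᵥ sampledGram δ N v *ᵥ x = δ * ∑ k ∈ range N, (v (k * δ) ⬝ᵥ x) ^ 2 := by
  simp only [sampledGram, smul_mulVec, dotProduct_smul, smul_eq_mul, sum_mulVec, dotProduct_sum,
    dotProduct_vecMulVec_self_mulVec]

end QuadraticForm

section RiemannSum

variable {g : ℝ → ℝ} {δ : ℝ} {N : ℕ}

theorem Icc_cell_subset (hδ : 0 ≤ δ) {k : ℕ} (hk : k < N) :
    Icc (k * δ) ((k + 1) * δ) ⊆ Icc 0 (N * δ) := by
  have hkN : (k : ℝ) + 1 ≤ N := by exact_mod_cast hk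
  exact Icc_subset_Icc (by positivity) (by gcongr)

theorem intervalIntegrable_cell (hδ : 0 ≤ δ) (hg : IntegrableOn g (Ioc 0 (N * δ))) {k : ℕ}
    (hk : k < N) : IntervalIntegrable g volume (k * δ) ((k + 1) * δ) := by
  rw [intervalIntegrable_iff_integrableOn_Ioc_of_le (by gcongr; linarith)]
  have hkN : (k : ℝ) + 1 ≤ N := by exact_mod_cast hk
  exact hg.mono_set (Ioc_subset_Ioc (by positivity) (by gcongr))

theorem integral_Ioc_eq_sum_intervalIntegral (hδ : 0 ≤ δ) (hg : IntegrableOn g (Ioc 0 (N * δ))) :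
    ∫ t in Ioc 0 (N * δ), g t = ∑ k ∈ range N, ∫ t in k * δ..(k + 1) * δ, g t := by
  have h := intervalIntegral.sum_integral_adjacent_intervals (a := fun k : ℕ => k * δ) (μ := volume)
    (f := g) (n := N) fun k hk => by
      simpa only [Nat.cast_succ] using intervalIntegrable_cell hδ hg hk
  simp only [Nat.cast_succ, Nat.cast_zero, zero_mul] at h
  rw [h, intervalIntegral.integral_of_le (by positivity)]

theorem riemannSum_sub_integral_eq (hδ : 0 ≤ δ) (hg : IntegrableOn g (Ioc 0 (N * δ))) :
    δ * ∑ k ∈ range N, g (k * δ) - ∫ t in Ioc 0 (N * δ), g t =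
      ∑ k ∈ range N, ∫ t in k * δ..(k + 1) * δ, (g (k * δ) - g t) := by
  rw [integral_Ioc_eq_sum_intervalIntegral hδ hg, mul_sum, ← sum_sub_distrib]
  refine sum_congr rfl fun k hk => ?_
  rw [intervalIntegral.integral_sub intervalIntegrable_const
    (intervalIntegrable_cell hδ hg (mem_range.mp hk)), intervalIntegral.integral_const,
    smul_eq_mul]
  ring

theorem riemannSum_le_integral_add_of_sub_le_mul (hδ : 0 ≤ δ)
    (hg : IntegrableOn g (Ioc 0 (N * δ))) {C : ℝ}
    (hC : ∀ k < N, ∀ t ∈ Icc (k * δ) ((k + 1) * δ), g (k * δ) - g t ≤ C * (t - k * δ)) :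
    δ * ∑ k ∈ range N, g (k * δ) ≤ (∫ t in Ioc 0 (N * δ), g t) + N * (C * δ ^ 2 / 2) := by
  have hpiece : ∀ k ∈ range N, ∫ t in k * δ..(k + 1) * δ, (g (k * δ) - g t) ≤ C * δ ^ 2 / 2 := by
    intro k hk
    have hk := mem_range.mp hk
    have hle : (k : ℝ) * δ ≤ (k + 1) * δ := by gcongr; linarith
    calc ∫ t in k * δ..(k + 1) * δ, (g (k * δ) - g t)
        ≤ ∫ t in k * δ..(k + 1) * δ, C * (t - k * δ) :=
          intervalIntegral.integral_mono_on hle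
            (intervalIntegrable_const.sub (intervalIntegrable_cell hδ hg hk))
            (by apply Continuous.intervalIntegrable; fun_prop) (hC k hk)
      _ = C * δ ^ 2 / 2 := by
          rw [intervalIntegral.integral_const_mul,
            intervalIntegral.integral_comp_sub_right (fun x => x), sub_self, integral_id]
          ring
  have hexcess := sum_le_sum hpiece
  rw [← riemannSum_sub_integral_eq hδ hg, sum_const, card_range, nsmul_eq_mul] at hexcess
  exact sub_le_iff_le_add'.mp hexcess

theorem exists_mul_le_intervalIntegral {a b : ℝ} (hab : a < b)
    (hg : IntervalIntegrable g volume a b) : ∃ t ∈ Icc a b, (b - a) * g t ≤ ∫ t in a..b, g t := by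
  obtain ⟨t, ht, hgt⟩ := exists_le_setAverage (by simp [hab]) (by simp)
    ((intervalIntegrable_iff_integrableOn_Ioc_of_le hab.le).mp hg)
  refine ⟨t, Ioc_subset_Icc_self ht, ?_⟩
  rw [setAverage_eq, Real.volume_real_Ioc_of_le hab.le, smul_eq_mul,
    le_inv_mul_iff₀ (sub_pos.mpr hab)] at hgt
  rwa [intervalIntegral.integral_of_le hab.le]

theorem riemannSum_le_integral_add_of_forall_sum_sub_le (hδ : 0 < δ)
    (hg : IntegrableOn g (Ioc 0 (N * δ))) {C : ℝ}
    (hC : ∀ t : ℕ → ℝ, (∀ k : ℕ, t k ∈ Icc (k * δ) ((k + 1) * δ)) →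
      ∑ k ∈ range N, (g (k * δ) - g (t k)) ≤ C) :
    δ * ∑ k ∈ range N, g (k * δ) ≤ (∫ t in Ioc 0 (N * δ), g t) + δ * C := by
  have hchoice : ∀ k : ℕ, ∃ t ∈ Icc ((k : ℝ) * δ) ((k + 1) * δ),
      k < N → δ * g t ≤ ∫ s in k * δ..(k + 1) * δ, g s := by
    intro k
    by_cases hk : k < N
    · obtain ⟨t, ht, hgt⟩ := exists_mul_le_intervalIntegral (by linarith)
        (intervalIntegrable_cell hδ.le hg hk)
      exact ⟨t, ht, fun _ => by rwa [show ((k : ℝ) + 1) * δ - k * δ = δ by ring] at hgt⟩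
    · exact ⟨k * δ, left_mem_Icc.mpr (by gcongr; linarith), fun h => absurd h hk⟩
  choose t ht hgt using hchoice
  have hsum := hC t ht
  calc δ * ∑ k ∈ range N, g (k * δ)
      = δ * ∑ k ∈ range N, (g (k * δ) - g (t k)) + ∑ k ∈ range N, δ * g (t k) := by
        rw [mul_sum, mul_sum, ← sum_add_distrib]
        exact sum_congr rfl fun k _ => by ring
    _ ≤ δ * C + ∑ k ∈ range N, ∫ s in k * δ..(k + 1) * δ, g s := by
        gcongr with k hk
        exact hgt k (mem_range.mp hk)
    _ = (∫ t in Ioc 0 (N * δ), g t) + δ * C := by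
        rw [integral_Ioc_eq_sum_intervalIntegral hδ.le hg]; ring

end RiemannSum

section SquareVariation

variable {ι : Type} [Fintype ι] [DecidableEq ι]

noncomputable def sqDist (v : ℝ → ι → ℝ) (s t : ℝ) : ℝ :=
  opNorm (vecMulVec (v s) (v s) - vecMulVec (v t) (v t))

theorem sqDist_comm (v : ℝ → ι → ℝ) (s t : ℝ) : sqDist v s t = sqDist v t s := by
  simp only [sqDist, opNorm, map_sub, norm_sub_rev]

theorem sqDist_nonneg (v : ℝ → ι → ℝ) (s t : ℝ) : 0 ≤ sqDist v s t := norm_nonneg _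

theorem sq_dotProduct_sub_sq_le (v : ℝ → ι → ℝ) (x : ι → ℝ) (s t : ℝ) :
    (v s ⬝ᵥ x) ^ 2 - (v t ⬝ᵥ x) ^ 2 ≤ sqDist v s t * (x ⬝ᵥ x) := by
  rw [← dotProduct_vecMulVec_self_mulVec, ← dotProduct_vecMulVec_self_mulVec, ← dotProduct_sub,
    ← sub_mulVec]
  exact dotProduct_mulVec_le_opNorm _ x

theorem sum_sqDist_le_of_totalSqVarLE {T c : ℝ} {v : ℝ → ι → ℝ} (hv : TotalSqVarLE T v c)
    {p : ℕ → ℝ} (hp : Monotone p) {M : ℕ} (hp0 : p 0 = 0) (hpM : p M = T) :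
    ∑ m ∈ range M, sqDist v (p (m + 1)) (p m) ≤ c := by
  refine hv _ ⟨M, fun i => p i, hp.comp Fin.val_strictMono.monotone, hp0, hpM, ?_⟩
  rw [← Fin.sum_univ_eq_sum_range (fun m => sqDist v (p (m + 1)) (p m))]
  rfl

theorem sum_range_two_mul {M : Type*} [AddCommMonoid M] (f : ℕ → M) (n : ℕ) :
    ∑ m ∈ range (2 * n), f m = ∑ k ∈ range n, (f (2 * k) + f (2 * k + 1)) := by
  induction n with
  | zero => simp
  | succ n ih =>
    rw [show 2 * (n + 1) = 2 * n + 1 + 1 by ring, sum_range_succ, sum_range_succ, ih,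
      sum_range_succ, add_assoc]

theorem sum_sqDist_interlaced_le_of_totalSqVarLE {T c : ℝ} {v : ℝ → ι → ℝ}
    (hv : TotalSqVarLE T v c) {a t : ℕ → ℝ} {N : ℕ} (ha0 : a 0 = 0) (haN : a N = T)
    (hat : ∀ k, a k ≤ t k) (hta : ∀ k, t k ≤ a (k + 1)) :
    ∑ k ∈ range N, sqDist v (t k) (a k) ≤ c := by
  set p : ℕ → ℝ := fun m => if m % 2 = 0 then a (m / 2) else t (m / 2) with hp
  have hp_even (k : ℕ) : p (2 * k) = a k := by simp [hp]
  have hp_odd (k : ℕ) : p (2 * k + 1) = t k := by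
    simp [hp, show (2 * k + 1) % 2 = 1 by omega, show (2 * k + 1) / 2 = k by omega]
  have hmono : Monotone p := by
    refine monotone_nat_of_le_succ fun m => ?_
    obtain ⟨k, rfl | rfl⟩ := Nat.even_or_odd' m
    · rw [hp_even, hp_odd]; exact hat k
    · rw [hp_odd, show 2 * k + 1 + 1 = 2 * (k + 1) by ring, hp_even]; exact hta k
  calc ∑ k ∈ range N, sqDist v (t k) (a k)
      ≤ ∑ k ∈ range N, (sqDist v (t k) (a k) + sqDist v (a (k + 1)) (t k)) :=
        sum_le_sum fun k _ => le_add_of_nonneg_right (sqDist_nonneg _ _ _)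
    _ = ∑ m ∈ range (2 * N), sqDist v (p (m + 1)) (p m) := by
        rw [sum_range_two_mul]
        refine sum_congr rfl fun k _ => ?_
        rw [hp_even, hp_odd, show 2 * k + 1 + 1 = 2 * (k + 1) by ring, hp_even]
    _ ≤ c := sum_sqDist_le_of_totalSqVarLE hv hmono (by simpa [ha0] using hp_even 0)
        (by rw [hp_even, haN])

end SquareVariation

section SampledSignal

variable {ι : Type} [Fintype ι] [DecidableEq ι] {w : ℝ → ι → ℝ} {δ : ℝ} {N : ℕ}

theorem riemannSum_sq_dotProduct_le_of_sqLipschitz (hδ : 0 ≤ δ) {L : ℝ}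
    (hw : SqLipschitz (N * δ) L w) {x : ι → ℝ}
    (hg : IntegrableOn (fun t => (w t ⬝ᵥ x) ^ 2) (Ioc 0 (N * δ))) :
    δ * ∑ k ∈ range N, (w (k * δ) ⬝ᵥ x) ^ 2 ≤
      (∫ t in Ioc 0 (N * δ), (w t ⬝ᵥ x) ^ 2) + N * (L * (x ⬝ᵥ x) * δ ^ 2 / 2) := by
  refine riemannSum_le_integral_add_of_sub_le_mul hδ hg fun k hk t ht => ?_
  have hcell := Icc_cell_subset hδ hk
  calc (w (k * δ) ⬝ᵥ x) ^ 2 - (w t ⬝ᵥ x) ^ 2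
      ≤ sqDist w (k * δ) t * (x ⬝ᵥ x) := sq_dotProduct_sub_sq_le w x _ _
    _ ≤ L * |k * δ - t| * (x ⬝ᵥ x) := by
        gcongr
        · exact dotProduct_self_star_nonneg x
        · exact hw _ (hcell (left_mem_Icc.mpr (ht.1.trans ht.2))) t (hcell ht)
    _ = L * (x ⬝ᵥ x) * (t - k * δ) := by
        rw [abs_sub_comm, abs_of_nonneg (sub_nonneg.mpr ht.1)]; ring

theorem riemannSum_sq_dotProduct_le_of_totalSqVarLE (hδ : 0 < δ) {c : ℝ}
    (hw : TotalSqVarLE (N * δ) w c) {x : ι → ℝ}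
    (hg : IntegrableOn (fun t => (w t ⬝ᵥ x) ^ 2) (Ioc 0 (N * δ))) :
    δ * ∑ k ∈ range N, (w (k * δ) ⬝ᵥ x) ^ 2 ≤
      (∫ t in Ioc 0 (N * δ), (w t ⬝ᵥ x) ^ 2) + δ * (c * (x ⬝ᵥ x)) := by
  refine riemannSum_le_integral_add_of_forall_sum_sub_le hδ hg fun t ht => ?_
  calc ∑ k ∈ range N, ((w (k * δ) ⬝ᵥ x) ^ 2 - (w (t k) ⬝ᵥ x) ^ 2)
      ≤ ∑ k ∈ range N, sqDist w (t k) (k * δ) * (x ⬝ᵥ x) := sum_le_sum fun k _ => by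
        rw [sqDist_comm]; exact sq_dotProduct_sub_sq_le w x _ _
    _ = (∑ k ∈ range N, sqDist w (t k) (k * δ)) * (x ⬝ᵥ x) := (sum_mul ..).symm
    _ ≤ c * (x ⬝ᵥ x) := by
        gcongr
        · exact dotProduct_self_star_nonneg x
        · exact sum_sqDist_interlaced_le_of_totalSqVarLE hw (a := fun k => k * δ) (by simp) rfl
            (fun k => (ht k).1) (fun k => by simpa using (ht k).2)

end SampledSignal

theorem stmt7_general {n : ℕ} (T L δ : ℝ) (hδ : 0 < δ)
    (N : ℕ) (hTN : T = N * δ)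
    (Q : Matrix (Fin n) (Fin n) ℝ) (hQ : Q.PosSemidef)
    (w : ℝ → Fin n → ℝ)
    (hint : ∀ i j, MeasureTheory.IntegrableOn
      (fun t => Matrix.vecMulVec (w t) (w t) i j) (Set.Ioc (0:ℝ) T))
    (hnoise : SqLipschitz T L w ∨ TotalSqVarLE T w (L * T / 2))
    (h : loewnerLE (matIntegral T (fun t => Matrix.vecMulVec (w t) (w t))) Q) :
    loewnerLE (sampledGram δ N w)
      (Q + (δ * T * L / 2) • (1 : Matrix (Fin n) (Fin n) ℝ)) := by
  subst hTN
  refine loewnerLE_of_forall_dotProduct_mulVec_le (sampledGram_posSemidef hδ.le N w).1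
    (hQ.1.add (isHermitian_one.smul (.all _))) fun x => ?_
  have hg := integrableOn_dotProduct_mulVec hint x
  have hQx := h.dotProduct_mulVec_le x
  simp only [dotProduct_vecMulVec_self_mulVec, dotProduct_matIntegral_mulVec hint] at hg hQx
  rw [dotProduct_sampledGram_mulVec, add_mulVec, dotProduct_add, smul_mulVec, one_mulVec,
    dotProduct_smul, smul_eq_mul]
  rcases hnoise with hLip | hVar
  · linarith [riemannSum_sq_dotProduct_le_of_sqLipschitz hδ.le hLip hg]
  · linarith [riemannSum_sq_dotProduct_le_of_totalSqVarLE hδ hVar hg]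

theorem stmt7 {n : ℕ} (T L δ : ℝ) (hT : 0 < T) (hL : 0 ≤ L) (hδ : 0 < δ)
    (N : ℕ) (hN : 0 < N) (hTN : T = N * δ)
    (Q : Matrix (Fin n) (Fin n) ℝ) (hQ : Q.PosSemidef)
    (w : ℝ → Fin n → ℝ)
    (hint : ∀ i j, MeasureTheory.IntegrableOn
      (fun t => Matrix.vecMulVec (w t) (w t) i j) (Set.Ioc (0:ℝ) T))
    (hnoise : SqLipschitz T L w ∨ TotalSqVarLE T w (L * T / 2))
    (h : loewnerLE (matIntegral T (fun t => Matrix.vecMulVec (w t) (w t))) Q) :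
    loewnerLE (sampledGram δ N w)
      (Q + (δ * T * L / 2) • (1 : Matrix (Fin n) (Fin n) ℝ)) :=
  stmt7_general T L δ hδ N hTN Q hQ w hint hnoise h
end

section
/- Suppose the data (x,u) satisfy the standing data assumptions and let λ ≥ 1 be such that A·A^T + B·B^T < (λ−1)·I_n (strict Loewner inequality, i.e., (λ−1)I_n − AA^T − BB^T is positive definite) for every (A,B) ∈ Σ(Q). If the stacked signal ξ(t) := (ẋ(t); −x(t); −u(t)) ∈ ℝ^{2n+m} is L-square Lipschitz for some L ≥ 0, then for every (A,B) ∈ Σ(Q) the signal ẋ − Ax − Bu is λL-square Lipschitz; that is, Σ(Q) ⊆ M^{λL}_{x,u}. -/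
open MeasureTheory Matrix

/-!
The noise is a fixed linear image of the stacked signal: `ẋ - A x - B u = S ξ` with
`S = [I A B]`. Hence the increment `w wᵀ(t₁) - w wᵀ(t₂)` of the noise `w` equals
`S (ξ ξᵀ(t₁) - ξ ξᵀ(t₂)) Sᵀ`, whose operator norm is at most `‖Sᵀ‖² = ‖S Sᵀ‖` times that of the
increment of `ξ ξᵀ`, and `S Sᵀ = I + A Aᵀ + B Bᵀ ≤ λ I` on `Σ(Q)`.
-/

open scoped Matrix.Norms.L2Operator ComplexOrder

namespace Matrix

lemma mul_vecMulVec_mul_transpose {R ι κ : Type*} [CommSemiring R] [Fintype κ]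
    (M : Matrix ι κ R) (v w : κ → R) :
    M * vecMulVec v w * Mᵀ = vecMulVec (M *ᵥ v) (M *ᵥ w) := by
  rw [mul_vecMulVec, vecMulVec_mul, vecMul_transpose]

lemma fromCols_mul_transpose_fromCols {R l m n : Type*} [CommSemiring R] [Fintype m]
    [Fintype n] (A : Matrix l m R) (B : Matrix l n R) :
    fromCols A B * (fromCols A B)ᵀ = A * Aᵀ + B * Bᵀ := by
  rw [transpose_fromCols, fromCols_mul_fromRows]

variable {𝕜 : Type*} [RCLike 𝕜] {m n : Type*} [Fintype m] [Fintype n] [DecidableEq m]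

lemma l2_opNorm_mul_mul_conjTranspose_le [DecidableEq n] (M : Matrix m n 𝕜) (D : Matrix n n 𝕜) :
    ‖M * D * Mᴴ‖ ≤ ‖Mᴴ‖ ^ 2 * ‖D‖ :=
  calc ‖M * D * Mᴴ‖ ≤ ‖M‖ * ‖D‖ * ‖Mᴴ‖ :=
        (l2_opNorm_mul _ _).trans (by gcongr; exact l2_opNorm_mul _ _)
    _ = ‖Mᴴ‖ ^ 2 * ‖D‖ := by rw [l2_opNorm_conjTranspose]; ring

lemma l2_opNorm_conjTranspose_sq_le {M : Matrix m n 𝕜} {c : ℝ} (hc : 0 ≤ c)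
    (h : (c • (1 : Matrix m m 𝕜) - M * Mᴴ).PosSemidef) : ‖Mᴴ‖ ^ 2 ≤ c := by
  suffices ‖Mᴴ‖ ≤ √c from Real.le_sqrt (norm_nonneg _) hc |>.mp this
  refine ContinuousLinearMap.opNorm_le_bound _ (Real.sqrt_nonneg c) fun v => ?_
  refine (sq_le_sq₀ (norm_nonneg _) (by positivity)).mp ?_
  rw [mul_pow, Real.sq_sqrt hc, @norm_sq_eq_re_inner 𝕜, @norm_sq_eq_re_inner 𝕜]
  set w := WithLp.ofLp v
  change RCLike.re ((Mᴴ *ᵥ w) ⬝ᵥ star (Mᴴ *ᵥ w)) ≤ c * RCLike.re (w ⬝ᵥ star w)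
  have hw := h.re_dotProduct_nonneg w
  rw [sub_mulVec, smul_mulVec, one_mulVec, dotProduct_sub, dotProduct_smul, map_sub,
    RCLike.smul_re, sub_nonneg] at hw
  rwa [star_mulVec, conjTranspose_conjTranspose, dotProduct_comm, ← dotProduct_mulVec,
    mulVec_mulVec, dotProduct_comm w]

end Matrix

open Matrix

lemma opNorm_eq_l2_opNorm {ι κ : Type} [Fintype ι] [Fintype κ] [DecidableEq κ]
    (M : Matrix ι κ ℝ) : opNorm M = ‖M‖ :=
  rfl

lemma SqLipschitz.mulVec {ι κ : Type} [Fintype ι] [DecidableEq ι] [Fintype κ] [DecidableEq κ]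
    {T L c : ℝ} {v : ℝ → κ → ℝ} (hv : SqLipschitz T L v) (M : Matrix ι κ ℝ) (hc : 0 ≤ c)
    (hM : (c • (1 : Matrix ι ι ℝ) - M * Mᵀ).PosSemidef) :
    SqLipschitz T (c * L) fun t => M *ᵥ v t := by
  intro t₁ ht₁ t₂ ht₂
  rw [← conjTranspose_eq_transpose_of_trivial] at hM
  have hD := hv t₁ ht₁ t₂ ht₂
  rw [opNorm_eq_l2_opNorm] at hD ⊢
  rw [← mul_vecMulVec_mul_transpose, ← mul_vecMulVec_mul_transpose, ← Matrix.sub_mul,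
    ← Matrix.mul_sub, ← conjTranspose_eq_transpose_of_trivial, mul_assoc c]
  exact (l2_opNorm_mul_mul_conjTranspose_le _ _).trans <|
    mul_le_mul (l2_opNorm_conjTranspose_sq_le hc hM) hD (norm_nonneg _) hc

lemma noiseSig_eq_mulVec_xiSig {n m : ℕ} (xdot x : ℝ → Fin n → ℝ) (u : ℝ → Fin m → ℝ)
    (A : Matrix (Fin n) (Fin n) ℝ) (B : Matrix (Fin n) (Fin m) ℝ) :
    noiseSig xdot x u A B =
      fun t => fromCols (1 : Matrix (Fin n) (Fin n) ℝ) (fromCols A B) *ᵥ xiSig xdot x u t := by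
  ext t : 1
  change _ = _ *ᵥ Sum.elim (xdot t) (Sum.elim (-x t) (-u t))
  rw [fromCols_mulVec_sumElim, fromCols_mulVec_sumElim, one_mulVec, mulVec_neg, mulVec_neg,
    noiseSig]
  abel

theorem stmt13_general
    {n m : ℕ} (T : ℝ)
    (x xdot : ℝ → Fin n → ℝ) (u : ℝ → Fin m → ℝ)
    (Q : Matrix (Fin n) (Fin n) ℝ)
    (lam : ℝ) (hlam : 1 ≤ lam)
    (hbd : ∀ AB ∈ SigmaCont T xdot x u Q,
      loewnerLT (AB.1 * AB.1.transpose + AB.2 * AB.2.transpose)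
        ((lam - 1) • (1 : Matrix (Fin n) (Fin n) ℝ)))
    (L : ℝ)
    (hxi : SqLipschitz T L (xiSig xdot x u)) :
    SigmaCont T xdot x u Q ⊆ Mset T (lam * L) xdot x u := by
  rintro ⟨A, B⟩ hAB
  set S := fromCols (1 : Matrix (Fin n) (Fin n) ℝ) (fromCols A B)
  have hS : (lam • (1 : Matrix (Fin n) (Fin n) ℝ) - S * Sᵀ).PosSemidef := by
    convert (hbd (A, B) hAB).posSemidef using 1
    rw [fromCols_mul_transpose_fromCols, fromCols_mul_transpose_fromCols, Matrix.one_mul,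
      transpose_one, sub_smul, one_smul, sub_sub]
  have hnoise := hxi.mulVec S (by linarith) hS
  rwa [← noiseSig_eq_mulVec_xiSig] at hnoise

theorem stmt13
    {n m : ℕ} (T : ℝ) (hT : 0 < T)
    (x xdot : ℝ → Fin n → ℝ) (u : ℝ → Fin m → ℝ)
    (Q : Matrix (Fin n) (Fin n) ℝ) (hQ : Q.PosSemidef)
    (hxdotL2 : MeasureTheory.MemLp xdot 2 (MeasureTheory.volume.restrict (Set.Icc (0:ℝ) T)))
    (huL2 : MeasureTheory.MemLp u 2 (MeasureTheory.volume.restrict (Set.Icc (0:ℝ) T)))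
    (hAC : ∀ t ∈ Set.Icc (0:ℝ) T, ∀ i, x t i = x 0 i + ∫ s in (0:ℝ)..t, xdot s i)
    (As : Matrix (Fin n) (Fin n) ℝ) (Bs : Matrix (Fin n) (Fin m) ℝ)
    (htrue : (As, Bs) ∈ SigmaCont T xdot x u Q)
    (lam : ℝ) (hlam : 1 ≤ lam)
    (hbd : ∀ AB ∈ SigmaCont T xdot x u Q,
      loewnerLT (AB.1 * AB.1.transpose + AB.2 * AB.2.transpose)
        ((lam - 1) • (1 : Matrix (Fin n) (Fin n) ℝ)))
    (L : ℝ) (hL : 0 ≤ L)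
    (hxi : SqLipschitz T L (xiSig xdot x u)) :
    SigmaCont T xdot x u Q ⊆ Mset T (lam * L) xdot x u :=
  stmt13_general T x xdot u Q lam hlam hbd L hxi
end
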